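/- One has 0.023 < d̄ < 0.024, where d̄ = ∫_{1.1}^{1.9} r(x)·g(x) dx. -/
import Mathlib


noncomputable def a₁ : ℝ := 2.9 / (2.9 / 1.1) ^ (0.95 : ℝ)
noncomputable def a₂ : ℝ := 2.9 / (2.9 / 1.1) ^ (0.45 : ℝ)

/-- The piecewise function `r` on `[1.1, 1.9]`. -/
noncomputable def r (x : ℝ) : ℝ :=
  if x < a₁ then (x - 1) / 2
  else if x ≤ a₂ then
    (x - 1) / 2 - (1 / Real.log (2.9 / 1.1)) *
      Real.log (2.9 / (1 + 2 * Real.log (2.9 / x) / Real.log (2.9 / 1.1)))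
  else (x - 1) / 2 - Real.log (2.9 / 1.9) / Real.log (2.9 / 1.1)

/-- The density `g` on `[1.1, 2.9]`. -/
noncomputable def g (x : ℝ) : ℝ := 1 / (x * Real.log (2.9 / 1.1))


noncomputable def LL : ℝ := Real.log (2.9 / 1.1)
noncomputable def MM : ℝ := Real.log (2.9 / 1.9)

lemma LL_pos : 0 < LL := Real.log_pos (by norm_num)
lemma MM_pos : 0 < MM := Real.log_pos (by norm_num)

lemma LL_gt : 0.969400 < LL := by
  have hx : |(7/29 : ℝ)| < 1 := by rw [abs_of_pos] <;> norm_num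
  have h := Real.abs_log_sub_add_sum_range_le hx 12
  have h1 : (1:ℝ) - 7/29 = (29/22)⁻¹ := by norm_num
  have he : |(7/29:ℝ)| = 7/29 := by rw [abs_of_pos] ; norm_num
  rw [h1, Real.log_inv, he, abs_le] at h
  simp only [Finset.sum_range_succ, Finset.sum_range_zero] at h
  norm_num at h
  have h2 : LL = Real.log 2 + Real.log (29/22) := by
    rw [LL, show (2.9:ℝ)/1.1 = 2 * (29/22) by norm_num,
      Real.log_mul (by norm_num) (by norm_num)]
  rw [h2]
  nlinarith [h.1, h.2, Real.log_two_gt_d9]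

lemma LL_lt : LL < 0.969401 := by
  have hx : |(7/29 : ℝ)| < 1 := by rw [abs_of_pos] <;> norm_num
  have h := Real.abs_log_sub_add_sum_range_le hx 12
  have h1 : (1:ℝ) - 7/29 = (29/22)⁻¹ := by norm_num
  have he : |(7/29:ℝ)| = 7/29 := by rw [abs_of_pos] ; norm_num
  rw [h1, Real.log_inv, he, abs_le] at h
  simp only [Finset.sum_range_succ, Finset.sum_range_zero] at h
  norm_num at h
  have h2 : LL = Real.log 2 + Real.log (29/22) := by
    rw [LL, show (2.9:ℝ)/1.1 = 2 * (29/22) by norm_num,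
      Real.log_mul (by norm_num) (by norm_num)]
  rw [h2]
  nlinarith [h.1, h.2, Real.log_two_lt_d9]

lemma MM_gt : 0.422856 < MM := by
  have hx : |(9/38 : ℝ)| < 1 := by rw [abs_of_pos] <;> norm_num
  have h := Real.abs_log_sub_add_sum_range_le hx 12
  have h1 : (1:ℝ) - 9/38 = 29/38 := by norm_num
  have he : |(9/38:ℝ)| = 9/38 := by rw [abs_of_pos] ; norm_num
  rw [h1, he, abs_le] at h
  simp only [Finset.sum_range_succ, Finset.sum_range_zero] at h
  norm_num at h
  have h2 : MM = Real.log 2 + Real.log (29/38) := by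
    rw [MM, show (2.9:ℝ)/1.9 = 2 * (29/38) by norm_num,
      Real.log_mul (by norm_num) (by norm_num)]
  rw [h2]
  nlinarith [h.1, h.2, Real.log_two_gt_d9]

lemma MM_lt : MM < 0.422857 := by
  have hx : |(9/38 : ℝ)| < 1 := by rw [abs_of_pos] <;> norm_num
  have h := Real.abs_log_sub_add_sum_range_le hx 12
  have h1 : (1:ℝ) - 9/38 = 29/38 := by norm_num
  have he : |(9/38:ℝ)| = 9/38 := by rw [abs_of_pos] ; norm_num
  rw [h1, he, abs_le] at h
  simp only [Finset.sum_range_succ, Finset.sum_range_zero] at h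
  norm_num at h
  have h2 : MM = Real.log 2 + Real.log (29/38) := by
    rw [MM, show (2.9:ℝ)/1.9 = 2 * (29/38) by norm_num,
      Real.log_mul (by norm_num) (by norm_num)]
  rw [h2]
  nlinarith [h.1, h.2, Real.log_two_lt_d9]

lemma log29a1 : Real.log (2.9 / a₁) = 0.95 * LL := by
  have hY : (0:ℝ) < (2.9/1.1) ^ (0.95:ℝ) := Real.rpow_pos_of_pos (by norm_num) _
  have h : (2.9:ℝ) / a₁ = (2.9/1.1) ^ (0.95:ℝ) := by
    rw [a₁]; field_simp
  rw [h, Real.log_rpow (by norm_num), LL]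

lemma log29a2 : Real.log (2.9 / a₂) = 0.45 * LL := by
  have hY : (0:ℝ) < (2.9/1.1) ^ (0.45:ℝ) := Real.rpow_pos_of_pos (by norm_num) _
  have h : (2.9:ℝ) / a₂ = (2.9/1.1) ^ (0.45:ℝ) := by
    rw [a₂]; field_simp
  rw [h, Real.log_rpow (by norm_num), LL]

lemma a1_pos : 0 < a₁ := by
  have hY : (0:ℝ) < (2.9/1.1) ^ (0.95:ℝ) := Real.rpow_pos_of_pos (by norm_num) _
  rw [a₁]; positivity

lemma a2_pos : 0 < a₂ := by
  have hY : (0:ℝ) < (2.9/1.1) ^ (0.45:ℝ) := Real.rpow_pos_of_pos (by norm_num) _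
  rw [a₂]; positivity

lemma loga1 : Real.log a₁ = Real.log 2.9 - 0.95 * LL := by
  have := log29a1
  rw [Real.log_div (by norm_num) (ne_of_gt a1_pos)] at this
  linarith

lemma loga2 : Real.log a₂ = Real.log 2.9 - 0.45 * LL := by
  have := log29a2
  rw [Real.log_div (by norm_num) (ne_of_gt a2_pos)] at this
  linarith

lemma a1_gt : 1.1 < a₁ := by
  have h : (2.9/1.1 : ℝ) ^ (0.95:ℝ) < (2.9/1.1 : ℝ) ^ (1:ℝ) :=
    Real.rpow_lt_rpow_of_exponent_lt (by norm_num) (by norm_num)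
  rw [Real.rpow_one] at h
  have hY : (0:ℝ) < (2.9/1.1) ^ (0.95:ℝ) := Real.rpow_pos_of_pos (by norm_num) _
  have := div_lt_div_of_pos_left (by norm_num : (0:ℝ) < 2.9) hY h
  rw [a₁]
  calc (1.1:ℝ) = 2.9 / (2.9/1.1) := by norm_num
  _ < _ := this

lemma a1_lt_a2 : a₁ < a₂ := by
  have h : (2.9/1.1 : ℝ) ^ (0.45:ℝ) < (2.9/1.1 : ℝ) ^ (0.95:ℝ) :=
    Real.rpow_lt_rpow_of_exponent_lt (by norm_num) (by norm_num)
  have hY : (0:ℝ) < (2.9/1.1) ^ (0.45:ℝ) := Real.rpow_pos_of_pos (by norm_num) _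
  have := div_lt_div_of_pos_left (by norm_num : (0:ℝ) < 2.9) hY h
  rw [a₁, a₂]; exact this

lemma MM_lt_45LL : MM < 0.45 * LL := by
  nlinarith [MM_lt, LL_gt]

lemma a2_lt : a₂ < 1.9 := by
  have h1 : Real.log (2.9 / a₂) > Real.log (2.9/1.9) := by
    rw [log29a2, ← MM]; exact MM_lt_45LL
  have h2 : (2.9:ℝ)/1.9 < 2.9 / a₂ := by
    have h3 : (0:ℝ) < 2.9 / a₂ := div_pos (by norm_num) a2_pos
    exact (Real.log_lt_log_iff (by norm_num) h3).mp h1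
  have h4 := (div_lt_div_iff₀ (by norm_num) a2_pos).mp h2
  nlinarith

lemma a1_lt_19 : a₁ < 1.9 := a1_lt_a2.trans a2_lt
lemma a2_gt_11 : 1.1 < a₂ := a1_gt.trans a1_lt_a2

noncomputable def f1 (x : ℝ) : ℝ := ((x - 1) / 2) * (1 / (x * LL))
noncomputable def f2 (x : ℝ) : ℝ :=
  ((x - 1) / 2 - (1 / LL) * (Real.log 2.9 -
      Real.log (1 + 2 * (Real.log 2.9 - Real.log x) / LL))) * (1 / (x * LL))
noncomputable def f3 (x : ℝ) : ℝ := ((x - 1) / 2 - MM / LL) * (1 / (x * LL))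

noncomputable def uu (x : ℝ) : ℝ := 1 + 2 * (Real.log 2.9 - Real.log x) / LL
noncomputable def F1 (x : ℝ) : ℝ := (x - Real.log x) / (2 * LL)
noncomputable def F2 (x : ℝ) : ℝ :=
  (x - Real.log x) / (2 * LL) +
    (uu x * (Real.log 2.9 - Real.log (uu x)) + uu x) / (2 * LL)
noncomputable def F3 (x : ℝ) : ℝ := (x - Real.log x) / (2 * LL) - MM * Real.log x / LL ^ 2

lemma uu_pos {x : ℝ} (hx0 : 0 < x) (hx29 : x < 2.9) : 0 < uu x := by
  have h : Real.log x < Real.log 2.9 := Real.log_lt_log hx0 hx29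
  have := div_pos (by linarith : (0:ℝ) < 2 * (Real.log 2.9 - Real.log x)) LL_pos
  rw [uu]; linarith

lemma hasDerivAt_F1 {x : ℝ} (hx0 : 0 < x) : HasDerivAt F1 (f1 x) x := by
  have h : HasDerivAt (fun y : ℝ => (y - Real.log y) / (2 * LL)) ((1 - x⁻¹) / (2 * LL)) x :=
    ((hasDerivAt_id x).sub (Real.hasDerivAt_log (ne_of_gt hx0))).div_const (2 * LL)
  have he : (1 - x⁻¹) / (2 * LL) = f1 x := by
    rw [f1]; field_simp
  rw [← he]; exact h

lemma hasDerivAt_uu {x : ℝ} (hx0 : 0 < x) : HasDerivAt uu (2 * -x⁻¹ / LL) x := by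
  have h : HasDerivAt (fun y : ℝ => 1 + 2 * (Real.log 2.9 - Real.log y) / LL)
      (2 * -x⁻¹ / LL) x :=
    ((((Real.hasDerivAt_log (ne_of_gt hx0)).const_sub (Real.log 2.9)).const_mul 2).div_const
      LL).const_add 1
  exact h

lemma hasDerivAt_F2 {x : ℝ} (hx0 : 0 < x) (hx29 : x < 2.9) : HasDerivAt F2 (f2 x) x := by
  have hu := hasDerivAt_uu hx0
  have hupos := uu_pos hx0 hx29
  have hlogu : HasDerivAt (fun y => Real.log (uu y)) (2 * -x⁻¹ / LL / uu x) x :=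
    hu.log (ne_of_gt hupos)
  have hmul : HasDerivAt (fun y => uu y * (Real.log 2.9 - Real.log (uu y)))
      (2 * -x⁻¹ / LL * (Real.log 2.9 - Real.log (uu x)) + uu x * -(2 * -x⁻¹ / LL / uu x)) x :=
    hu.mul (hlogu.const_sub (Real.log 2.9))
  have h1 : HasDerivAt (fun y : ℝ => (y - Real.log y) / (2 * LL)) ((1 - x⁻¹) / (2 * LL)) x :=
    ((hasDerivAt_id x).sub (Real.hasDerivAt_log (ne_of_gt hx0))).div_const (2 * LL)
  have h2 := h1.add (((hmul.add hu).div_const (2 * LL)))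
  have he : (1 - x⁻¹) / (2 * LL) +
      (2 * -x⁻¹ / LL * (Real.log 2.9 - Real.log (uu x)) + uu x * -(2 * -x⁻¹ / LL / uu x) +
        2 * -x⁻¹ / LL) / (2 * LL) = f2 x := by
    rw [f2, show (1 + 2 * (Real.log 2.9 - Real.log x) / LL : ℝ) = uu x from rfl]
    have hLL := LL_pos.ne'
    have hxne := hx0.ne'
    have hune := hupos.ne'
    generalize uu x = w at hune ⊢
    generalize Real.log w = s
    field_simp
    ring
  rw [← he]
  exact h2

lemma hasDerivAt_F3 {x : ℝ} (hx0 : 0 < x) : HasDerivAt F3 (f3 x) x := by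
  have h1 : HasDerivAt (fun y : ℝ => (y - Real.log y) / (2 * LL)) ((1 - x⁻¹) / (2 * LL)) x :=
    ((hasDerivAt_id x).sub (Real.hasDerivAt_log (ne_of_gt hx0))).div_const (2 * LL)
  have h2 : HasDerivAt (fun y : ℝ => MM * Real.log y / LL ^ 2) (MM * x⁻¹ / LL ^ 2) x :=
    (((Real.hasDerivAt_log (ne_of_gt hx0)).const_mul MM)).div_const (LL ^ 2)
  have h3 := h1.sub h2
  have he : (1 - x⁻¹) / (2 * LL) - MM * x⁻¹ / LL ^ 2 = f3 x := by
    have hLL := LL_pos.ne'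
    rw [f3]; field_simp
  rw [← he]
  exact h3

lemma cont_g : ContinuousOn (fun x : ℝ => 1 / (x * LL)) (Set.Icc 1.1 1.9) := by
  apply ContinuousOn.div continuousOn_const (by fun_prop)
  intro x hx
  have : (0:ℝ) < x := lt_of_lt_of_le (by norm_num) hx.1
  exact mul_ne_zero this.ne' LL_pos.ne'

lemma cont_log : ContinuousOn (fun x : ℝ => Real.log x) (Set.Icc 1.1 1.9) := by
  apply ContinuousOn.log (by fun_prop)
  intro x hx
  have : (0:ℝ) < x := lt_of_lt_of_le (by norm_num) hx.1
  exact this.ne'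

lemma cont_f1 : ContinuousOn f1 (Set.Icc 1.1 1.9) := by
  apply ContinuousOn.mul (by fun_prop) cont_g

lemma cont_f2 : ContinuousOn f2 (Set.Icc 1.1 1.9) := by
  apply ContinuousOn.mul _ cont_g
  apply ContinuousOn.sub (by fun_prop)
  apply ContinuousOn.mul continuousOn_const
  apply ContinuousOn.sub continuousOn_const
  apply ContinuousOn.log
  · exact continuousOn_const.add ((continuousOn_const.mul (continuousOn_const.sub cont_log)).div_const LL)
  · intro x hx
    have hx0 : (0:ℝ) < x := lt_of_lt_of_le (by norm_num) hx.1
    have hx29 : x < 2.9 := lt_of_le_of_lt hx.2 (by norm_num)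
    have := uu_pos hx0 hx29
    rw [uu] at this
    exact this.ne'

lemma cont_f3 : ContinuousOn f3 (Set.Icc 1.1 1.9) := by
  apply ContinuousOn.mul (by fun_prop) cont_g

lemma ftc1 : ∫ x in (1.1:ℝ)..a₁, f1 x = F1 a₁ - F1 1.1 := by
  apply intervalIntegral.integral_eq_sub_of_hasDerivAt
  · intro x hx
    rw [Set.uIcc_of_le a1_gt.le] at hx
    exact hasDerivAt_F1 (lt_of_lt_of_le (by norm_num) hx.1)
  · apply ContinuousOn.intervalIntegrable
    rw [Set.uIcc_of_le a1_gt.le]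
    exact cont_f1.mono (Set.Icc_subset_Icc le_rfl a1_lt_19.le)

lemma ftc2 : ∫ x in a₁..a₂, f2 x = F2 a₂ - F2 a₁ := by
  apply intervalIntegral.integral_eq_sub_of_hasDerivAt
  · intro x hx
    rw [Set.uIcc_of_le a1_lt_a2.le] at hx
    have hx0 : (0:ℝ) < x := lt_of_lt_of_le (by linarith [a1_gt]) hx.1
    have hx29 : x < 2.9 := lt_of_le_of_lt hx.2 (by linarith [a2_lt])
    exact hasDerivAt_F2 hx0 hx29
  · apply ContinuousOn.intervalIntegrable
    rw [Set.uIcc_of_le a1_lt_a2.le]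
    exact cont_f2.mono (Set.Icc_subset_Icc a1_gt.le a2_lt.le)

lemma ftc3 : ∫ x in a₂..(1.9:ℝ), f3 x = F3 1.9 - F3 a₂ := by
  apply intervalIntegral.integral_eq_sub_of_hasDerivAt
  · intro x hx
    rw [Set.uIcc_of_le a2_lt.le] at hx
    exact hasDerivAt_F3 (lt_of_lt_of_le (by linarith [a2_gt_11]) hx.1)
  · apply ContinuousOn.intervalIntegrable
    rw [Set.uIcc_of_le a2_lt.le]
    exact cont_f3.mono (Set.Icc_subset_Icc a2_gt_11.le le_rfl)

lemma heq1 : Set.EqOn (fun x => r x * g x) f1 (Set.Icc 1.1 a₁) := by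
  intro x hx
  simp only [r, g, f1]
  rw [show Real.log ((2.9:ℝ)/1.1) = LL from rfl]
  by_cases hlt : x < a₁
  · rw [if_pos hlt]
  · have hxa : x = a₁ := le_antisymm hx.2 (not_lt.1 hlt)
    subst hxa
    rw [if_neg hlt, if_pos a1_lt_a2.le, log29a1]
    have harg : 1 + 2 * (0.95 * LL) / LL = 2.9 := by
      have hLL := LL_pos.ne'
      field_simp
      ring
    rw [harg, show (2.9:ℝ)/2.9 = 1 by norm_num, Real.log_one]
    ring

lemma heq2 : Set.EqOn (fun x => r x * g x) f2 (Set.Icc a₁ a₂) := by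
  intro x hx
  have hx0 : (0:ℝ) < x := lt_of_lt_of_le (by linarith [a1_gt]) hx.1
  have hx29 : x < 2.9 := lt_of_le_of_lt hx.2 (by linarith [a2_lt])
  simp only [r, g, f2]
  rw [show Real.log ((2.9:ℝ)/1.1) = LL from rfl]
  rw [if_neg (not_lt.2 hx.1), if_pos hx.2]
  rw [Real.log_div (by norm_num : (2.9:ℝ) ≠ 0) hx0.ne']
  have hupos := uu_pos hx0 hx29
  rw [uu] at hupos
  rw [Real.log_div (by norm_num : (2.9:ℝ) ≠ 0) hupos.ne']

lemma heq3 : Set.EqOn (fun x => r x * g x) f3 (Set.Icc a₂ 1.9) := by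
  intro x hx
  have hnlt : ¬ x < a₁ := not_lt.2 (le_trans a1_lt_a2.le hx.1)
  simp only [r, g, f3]
  rw [show Real.log ((2.9:ℝ)/1.1) = LL from rfl,
    show Real.log ((2.9:ℝ)/1.9) = MM from rfl]
  by_cases hle : x ≤ a₂
  · have hxa : x = a₂ := le_antisymm hle hx.1
    subst hxa
    rw [if_neg hnlt, if_pos le_rfl, log29a2]
    have harg : 1 + 2 * (0.45 * LL) / LL = 1.9 := by
      have hLL := LL_pos.ne'
      field_simp
      ring
    rw [harg, show Real.log ((2.9:ℝ)/1.9) = MM from rfl]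
    ring
  · rw [if_neg hnlt, if_neg hle]

lemma hlog11 : Real.log 1.1 = Real.log 2.9 - LL := by
  have : LL = Real.log 2.9 - Real.log 1.1 := by
    rw [LL, Real.log_div (by norm_num) (by norm_num)]
  linarith

lemma hlog19 : Real.log 1.9 = Real.log 2.9 - MM := by
  have : MM = Real.log 2.9 - Real.log 1.9 := by
    rw [MM, Real.log_div (by norm_num) (by norm_num)]
  linarith

lemma huu1 : uu a₁ = 2.9 := by
  have hLL := LL_pos.ne'
  rw [uu, loga1]
  field_simp
  ring

lemma huu2 : uu a₂ = 1.9 := by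
  have hLL := LL_pos.ne'
  rw [uu, loga2]
  field_simp
  ring

lemma key : (∫ x in (1.1:ℝ)..1.9, r x * g x)
    = (-(LL^2) - 0.2*LL + 2*LL*MM + 2*MM^2) / (2*LL^2) := by
  have hi1 : IntervalIntegrable (fun x => r x * g x) MeasureTheory.volume 1.1 a₁ := by
    rw [intervalIntegrable_iff_integrableOn_Icc_of_le a1_gt.le]
    exact ((cont_f1.mono (Set.Icc_subset_Icc le_rfl a1_lt_19.le)).integrableOn_Icc).congr_fun
      heq1.symm measurableSet_Icc
  have hi2 : IntervalIntegrable (fun x => r x * g x) MeasureTheory.volume a₁ a₂ := by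
    rw [intervalIntegrable_iff_integrableOn_Icc_of_le a1_lt_a2.le]
    exact ((cont_f2.mono (Set.Icc_subset_Icc a1_gt.le a2_lt.le)).integrableOn_Icc).congr_fun
      heq2.symm measurableSet_Icc
  have hi3 : IntervalIntegrable (fun x => r x * g x) MeasureTheory.volume a₂ 1.9 := by
    rw [intervalIntegrable_iff_integrableOn_Icc_of_le a2_lt.le]
    exact ((cont_f3.mono (Set.Icc_subset_Icc a2_gt_11.le le_rfl)).integrableOn_Icc).congr_fun
      heq3.symm measurableSet_Icc
  have hs1 := intervalIntegral.integral_add_adjacent_intervals hi2 hi3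
  have hs2 := intervalIntegral.integral_add_adjacent_intervals hi1 (hi2.trans hi3)
  have e1 : (∫ x in (1.1:ℝ)..a₁, r x * g x) = F1 a₁ - F1 1.1 := by
    rw [intervalIntegral.integral_congr (by rw [Set.uIcc_of_le a1_gt.le]; exact heq1)]
    exact ftc1
  have e2 : (∫ x in a₁..a₂, r x * g x) = F2 a₂ - F2 a₁ := by
    rw [intervalIntegral.integral_congr (by rw [Set.uIcc_of_le a1_lt_a2.le]; exact heq2)]
    exact ftc2
  have e3 : (∫ x in a₂..(1.9:ℝ), r x * g x) = F3 1.9 - F3 a₂ := by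
    rw [intervalIntegral.integral_congr (by rw [Set.uIcc_of_le a2_lt.le]; exact heq3)]
    exact ftc3
  have etot : (∫ x in (1.1:ℝ)..1.9, r x * g x)
      = (F1 a₁ - F1 1.1) + (F2 a₂ - F2 a₁) + (F3 1.9 - F3 a₂) := by
    rw [← e1, ← e2, ← e3]
    linarith [hs1, hs2]
  rw [etot]
  simp only [F1, F2, F3]
  rw [huu1, huu2, loga1, loga2, hlog11, hlog19]
  have hLL := LL_pos.ne'
  field_simp
  ring

/-- `0.023 < d̄ < 0.024` where `d̄ = ∫_{1.1}^{1.9} r(x) g(x) dx`. -/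
theorem statement10 :
    0.023 < (∫ x in (1.1 : ℝ)..1.9, r x * g x) ∧
      (∫ x in (1.1 : ℝ)..1.9, r x * g x) < 0.024 := by
  rw [key]
  have h1 := LL_gt
  have h2 := LL_lt
  have h3 := MM_gt
  have h4 := MM_lt
  have hpos : (0:ℝ) < 2 * LL^2 := by positivity
  constructor
  · rw [lt_div_iff₀ hpos]
    nlinarith [mul_pos (sub_pos.2 h1) (sub_pos.2 h3), mul_pos (sub_pos.2 h2) (sub_pos.2 h4),
      mul_pos (sub_pos.2 h1) (sub_pos.2 h4), mul_pos (sub_pos.2 h2) (sub_pos.2 h3),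
      sq_nonneg (LL - 0.9694), sq_nonneg (MM - 0.422856)]
  · rw [div_lt_iff₀ hpos]
    nlinarith [mul_pos (sub_pos.2 h1) (sub_pos.2 h3), mul_pos (sub_pos.2 h2) (sub_pos.2 h4),
      mul_pos (sub_pos.2 h1) (sub_pos.2 h4), mul_pos (sub_pos.2 h2) (sub_pos.2 h3),
      sq_nonneg (LL - 0.9694), sq_nonneg (MM - 0.422856)]
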